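/- arXiv:2009.11264 — 2 statements merged into one kernel-verified Lean document; each statement's English description precedes it below -/
import Mathlib

section
/- A word w ∈ {a, b}* belongs to Dₙ if and only if all prefix differences #a − #b of w lie in [0, n], the total difference #a − #b of w is 0, and additionally whenever the prefix difference is 0 the next symbol (if any) is a, and whenever it is n the next symbol (if any) is b. -/
/-- The star-free languages `Dₙ` over `Σ = {a, b}` (here `a` = `true`, `b` = `false`):
`D₀ = {ε}` and `Dₙ₊₁ = (a · Dₙ · b)*`. -/
def D : ℕ → Language Bool
  | 0 => 1
  | n + 1 => KStar.kstar (({[true]} : Language Bool) * D n * {[false]})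

namespace DAux

/-- The running difference `#a − #b`. -/
def df (w : List Bool) : ℤ := (w.count true : ℤ) - w.count false

@[simp] lemma df_nil : df [] = 0 := by simp [df]

@[simp] lemma df_append (x y : List Bool) : df (x ++ y) = df x + df y := by
  simp [df, List.count_append]; ring

@[simp] lemma df_cons (s : Bool) (w : List Bool) :
    df (s :: w) = (if s then 1 else -1) + df w := by
  cases s <;> simp [df, List.count_cons] <;> ring

/-- `w` is balanced with all prefix differences in `[0, n]`. -/
def Bal (n : ℕ) (w : List Bool) : Prop :=
  (∀ p, p <+: w → 0 ≤ df p ∧ df p ≤ n) ∧ df w = 0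

lemma prefix_append_cases {p x y : List Bool} (h : p <+: x ++ y) :
    p <+: x ∨ ∃ q, q <+: y ∧ p = x ++ q := by
  rcases le_or_gt p.length x.length with hl | hl
  · exact Or.inl (List.prefix_of_prefix_length_le h (List.prefix_append x y) hl)
  · right
    have hx : x <+: p :=
      List.prefix_of_prefix_length_le (List.prefix_append x y) h hl.le
    obtain ⟨q, rfl⟩ := hx
    refine ⟨q, ?_, rfl⟩
    exact (List.prefix_append_right_inj x).mp h

lemma bal_append {n : ℕ} {x y : List Bool} (hx : Bal n x) (hy : Bal n y) :
    Bal n (x ++ y) := by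
  refine ⟨?_, by simp [hx.2, hy.2]⟩
  intro p hp
  rcases prefix_append_cases hp with h | ⟨q, hq, rfl⟩
  · exact hx.1 p h
  · have := hy.1 q hq
    simp [hx.2]
    omega

lemma bal_block {n : ℕ} {u : List Bool} (hu : Bal n u) :
    Bal (n + 1) (true :: (u ++ [false])) := by
  constructor
  · intro p hp
    rcases p with _ | ⟨s, q⟩
    · refine ⟨by simp, by simp; positivity⟩
    · rw [List.cons_prefix_cons] at hp
      obtain ⟨rfl, hq⟩ := hp
      rcases prefix_append_cases hq with h | ⟨q', hq', rfl⟩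
      · have := hu.1 q h
        simp; omega
      · have hq'' : q' = [] ∨ q' = [false] := by
          rcases q' with _ | ⟨a, t⟩
          · exact Or.inl rfl
          · right; rw [List.cons_prefix_cons] at hq'
            obtain ⟨rfl, h⟩ := hq'
            rw [List.prefix_nil] at h; simp [h]
        rcases hq'' with rfl | rfl <;> (simp [hu.2]; try omega)
  · have := hu.2
    simp [df] at this ⊢
    omega

lemma bal_flatten {n : ℕ} {L : List (List Bool)} (h : ∀ y ∈ L, Bal n y) :
    Bal n L.flatten := by
  induction L with
  | nil => exact ⟨fun p hp => by simp [List.prefix_nil.mp hp], by simp⟩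
  | cons x L ih =>
    rw [List.flatten_cons]
    exact bal_append (h x (by simp)) (ih fun y hy => h y (by simp [hy]))

lemma mem_kstar_of_append {l : Language Bool} {x y : List Bool}
    (hx : x ∈ l) (hy : y ∈ KStar.kstar l) : x ++ y ∈ KStar.kstar l := by
  rw [Language.mem_kstar] at hy ⊢
  obtain ⟨L, rfl, hL⟩ := hy
  refine ⟨x :: L, by simp, ?_⟩
  intro z hz
  rw [List.mem_cons] at hz
  rcases hz with rfl | hz
  · exact hx
  · exact hL _ hz

/-- Backward direction at level `n+1`, by strong induction on length. -/
lemma bal_mem_D_succ (n : ℕ) (ihn : ∀ u, Bal n u → u ∈ D n) :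
    ∀ N w, w.length ≤ N → Bal (n + 1) w → w ∈ D (n + 1) := by
  intro N
  induction N with
  | zero =>
    intro w hw _
    have : w = [] := by simpa using List.length_eq_zero_iff.mp (Nat.le_zero.mp hw)
    subst this
    rw [D, Language.mem_kstar]
    exact ⟨[], by simp, by simp⟩
  | succ N ihN =>
    intro w hw hbal
    rcases w with _ | ⟨s, t⟩
    · rw [D, Language.mem_kstar]; exact ⟨[], by simp, by simp⟩
    · -- the first symbol must be `true`
      have hs : s = true := by
        have := (hbal.1 [s] ⟨t, rfl⟩).1
        cases s
        · simp [df] at this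
        · rfl
      subst hs
      -- find the first position where the difference in `t` hits `-1`
      have hPex : df (t.take t.length) = -1 := by
        have h2 := hbal.2
        rw [df_cons] at h2
        simp at h2
        rw [List.take_length]
        omega
      classical
      have hPex' : ∃ k, df (t.take k) = -1 := ⟨t.length, hPex⟩
      obtain ⟨k, hkP, hkmin⟩ :
          ∃ k, df (t.take k) = -1 ∧ ∀ j, j < k → df (t.take j) ≠ -1 :=
        ⟨Nat.find hPex', Nat.find_spec hPex', fun j hj => Nat.find_min hPex' hj⟩
      have hknez : k ≠ 0 := by
        intro h
        rw [h] at hkP; simp at hkP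
      have hkle : k ≤ t.length := by
        by_contra h
        exact hkmin t.length (by omega) hPex
      obtain ⟨j, rfl⟩ : ∃ j, k = j + 1 := ⟨k - 1, by omega⟩
      have hjlt : j < t.length := by omega
      have htake : t.take (j + 1) = t.take j ++ [t[j]] := by
        rw [List.take_succ]
        simp [List.getElem?_eq_getElem hjlt]
      -- prefixes of `t` of length `< k` have nonneg difference
      have hpos : ∀ i, i < j + 1 → 0 ≤ df (t.take i) := by
        intro i hi
        have h1 := (hbal.1 (true :: t.take i)
          (by rw [List.cons_prefix_cons]; exact ⟨rfl, List.take_prefix i t⟩)).1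
        have h2 := hkmin i hi
        simp at h1
        omega
      -- the symbol at `j` is `false` and `df (t.take j) = 0`
      have hstep : df (t.take (j + 1)) = df (t.take j) + (if t[j] then 1 else -1) := by
        rw [htake, df_append, df_cons, df_nil]
        ring
      have hdfj : df (t.take j) = 0 ∧ t[j] = false := by
        have h0 := hpos j (by omega)
        rw [hstep] at hkP
        by_cases hb : t[j] = true
        · rw [hb] at hkP
          simp at hkP
          exact absurd h0 (by omega)
        · rw [Bool.not_eq_true] at hb
          rw [hb] at hkP
          simp at hkP
          exact ⟨by omega, hb⟩
      set u := t.take j with hu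
      set v := t.drop (j + 1) with hv
      have hts : t = u ++ [false] ++ v := by
        rw [hu, hv]
        conv_lhs => rw [← List.take_append_drop (j + 1) t]
        rw [htake, hdfj.2]
      -- `u` is balanced at level `n`
      have hbu : Bal n u := by
        constructor
        · intro p hp
          have hp' : p <+: t := hp.trans (List.take_prefix j t)
          obtain ⟨i, hi, rfl⟩ : ∃ i, i ≤ j ∧ p = t.take i := by
            obtain ⟨r, hr⟩ := hp
            refine ⟨p.length, ?_, ?_⟩
            · have hlen := congrArg List.length hr
              have hul : u.length = j := by
                rw [hu, List.length_take]
                omega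
              simp at hlen
              omega
            · rw [List.prefix_iff_eq_take] at hp'
              rw [← hp']
          refine ⟨hpos i (by omega), ?_⟩
          have := (hbal.1 (true :: t.take i)
            (by rw [List.cons_prefix_cons]; exact ⟨rfl, List.take_prefix i t⟩)).2
          simp at this
          omega
        · exact hdfj.1
      -- `v` is balanced at level `n+1`
      have hbv : Bal (n + 1) v := by
        constructor
        · intro p hp
          have : true :: (u ++ [false] ++ p) <+: true :: t := by
            rw [List.cons_prefix_cons, hts]
            exact ⟨rfl, (List.prefix_append_right_inj _).mpr hp⟩
          have h2 := hbal.1 _ this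
          have h3 : df (true :: (u ++ [false] ++ p)) = df p := by
            have h4 := hdfj.1
            simp [df] at h4 ⊢
            omega
          rw [h3] at h2
          exact h2
        · have h5 := hbal.2
          rw [hts] at h5
          have h4 := hdfj.1
          simp [df] at h4 h5 ⊢
          omega
      -- conclude
      have hvmem : v ∈ D (n + 1) := by
        refine ihN v ?_ hbv
        have := congrArg List.length hts
        simp at this
        simp at hw
        try omega
      have hblock : true :: (u ++ [false]) ∈
          (({[true]} : Language Bool) * D n * {[false]}) := by
        rw [Language.mem_mul]
        refine ⟨[true] ++ u, ?_, [false], rfl, by simp⟩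
        rw [Language.mem_mul]
        exact ⟨[true], rfl, u, ihn u hbu, rfl⟩
      have : true :: t = (true :: (u ++ [false])) ++ v := by
        rw [hts]; simp
      rw [D, this]
      exact mem_kstar_of_append hblock hvmem

lemma mem_D_iff_bal (n : ℕ) : ∀ w, w ∈ D n ↔ Bal n w := by
  induction n with
  | zero =>
    intro w
    rw [D, Language.mem_one]
    constructor
    · rintro rfl
      exact ⟨fun p hp => by simp [List.prefix_nil.mp hp], by simp⟩
    · rintro ⟨h1, _⟩
      rcases w with _ | ⟨s, t⟩
      · rfl
      · have := h1 [s] ⟨t, rfl⟩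
        cases s <;> simp [df] at this
  | succ n ih =>
    intro w
    constructor
    · intro hw
      rw [D, Language.mem_kstar] at hw
      obtain ⟨L, rfl, hL⟩ := hw
      refine bal_flatten fun y hy => ?_
      obtain ⟨x, hx, z, hz, rfl⟩ := Language.mem_mul.mp (hL y hy)
      obtain ⟨x1, hx1, u, hu, rfl⟩ := Language.mem_mul.mp hx
      have hx1' : x1 = [true] := hx1
      have hz' : z = [false] := hz
      subst hx1' hz'
      exact bal_block ((ih u).mp hu)
    · exact fun hb => bal_mem_D_succ n (fun u hu => (ih u).mpr hu) w.length w le_rfl hb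

end DAux

open DAux in
/-- Characterization of membership in `Dₙ`: all prefix differences `#a − #b` lie in
`[0, n]`, the total difference is `0`, and whenever the prefix difference is `0` the
next symbol (if any) is `a`, and whenever it is `n` the next symbol (if any) is `b`. -/
theorem mem_D_iff (n : ℕ) (w : List Bool) :
    w ∈ D n ↔
      (∀ p, p <+: w →
          0 ≤ (p.count true : ℤ) - p.count false ∧
            (p.count true : ℤ) - p.count false ≤ n) ∧
        (w.count true : ℤ) - w.count false = 0 ∧
        ∀ p s, p ++ [s] <+: w →
          ((p.count true : ℤ) - p.count false = 0 → s = true) ∧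
          ((p.count true : ℤ) - p.count false = n → s = false) := by
  rw [mem_D_iff_bal]
  simp only [Bal, df]
  constructor
  · rintro ⟨h1, h2⟩
    refine ⟨h1, h2, ?_⟩
    intro p s hp
    constructor
    · intro h0
      by_contra hs
      rw [Bool.not_eq_true] at hs
      subst hs
      have h := (h1 _ hp).1
      simp [List.count_append] at h
      omega
    · intro hn
      by_contra hs
      rw [Bool.not_eq_false] at hs
      subst hs
      have h := (h1 _ hp).2
      simp [List.count_append] at h
      omega
  · rintro ⟨h1, h2, _⟩
    exact ⟨h1, h2⟩
end

section
/- Every word in Dₙ of the form aᵏ·w (i.e., beginning with k consecutive a's followed by a word not starting with a) satisfies k ≤ n. In particular, the word aⁿ⁺¹bⁿ⁺¹ is not in Dₙ. -/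
def leadingTrues (l : List Bool) : ℕ := (l.takeWhile id).length

@[simp]
lemma leadingTrues_nil : leadingTrues [] = 0 := rfl

@[simp]
lemma leadingTrues_true_cons (l : List Bool) :
    leadingTrues (true :: l) = leadingTrues l + 1 := by
  simp [leadingTrues]

@[simp]
lemma leadingTrues_false_cons (l : List Bool) : leadingTrues (false :: l) = 0 := by
  simp [leadingTrues]

lemma leadingTrues_append_false_cons (v t : List Bool) :
    leadingTrues (v ++ false :: t) = leadingTrues v := by
  induction v with
  | nil => simp
  | cons b v ih => cases b <;> simp [ih]

lemma le_leadingTrues_replicate_append (k : ℕ) (w : List Bool) :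
    k ≤ leadingTrues (List.replicate k true ++ w) := by
  induction k with
  | zero => exact Nat.zero_le _
  | succ k ih => simpa [List.replicate_succ] using ih

lemma leadingTrues_le_of_mem_D (n : ℕ) : ∀ u ∈ D n, leadingTrues u ≤ n := by
  induction n with
  | zero =>
    intro u hu
    rw [D, Language.mem_one] at hu
    simp [hu]
  | succ n ih =>
    intro u hu
    rw [D, ← Language.one_add_self_mul_kstar_eq_kstar, Language.mem_add] at hu
    rcases hu with hnil | ⟨_, ⟨_, ⟨_, rfl, v, hv, rfl⟩, _, rfl, rfl⟩, t, -, rfl⟩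
    · rw [Language.mem_one] at hnil
      simp [hnil]
    · simpa [leadingTrues_append_false_cons] using ih v hv

/-- Every word in `Dₙ` beginning with `k` consecutive `a`'s followed by a word not
starting with `a` satisfies `k ≤ n`; in particular `aⁿ⁺¹bⁿ⁺¹ ∉ Dₙ`. -/
theorem D_initial_run_le (n : ℕ) :
    (∀ (k : ℕ) (w : List Bool),
        List.replicate k true ++ w ∈ D n → w.head? ≠ some true → k ≤ n) ∧
      List.replicate (n + 1) true ++ List.replicate (n + 1) false ∉ D n := by
  have run_le (k : ℕ) (w : List Bool) (hw : List.replicate k true ++ w ∈ D n) : k ≤ n :=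
    (le_leadingTrues_replicate_append k w).trans (leadingTrues_le_of_mem_D n _ hw)
  exact ⟨fun k w hw _ => run_le k w hw, fun hw => Nat.not_succ_le_self n (run_le (n + 1) _ hw)⟩
end
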